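/- Let C be a completely regular code with intersection array {β_0,...,β_{ρ−1}; γ_1,...,γ_ρ} in a distance-regular graph Γ with intersection numbers c_1,...,c_D. Fix j and a vertex v ∈ C^(j). Then for 1 ≤ i ≤ ρ − j, the identity c_i · |W_i ∩ C^(j+i)| = β_{j+i−1} · |W_{i−1} ∩ C^(j+i−1)| holds, where W_l denotes the set of vertices of Γ at distance l from v. -/

import Mathlib

open SimpleGraph

/-- The Hamming graph `H(n, α)`: vertices are `n`-tuples over `α`, adjacent iff
Hamming distance `1`. -/
def hammingGraph (n : ℕ) (α : Type*) [DecidableEq α] : SimpleGraph (Fin n → α) where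
  Adj x y := hammingDist x y = 1
  symm := ⟨fun x y (h : hammingDist x y = 1) => by show hammingDist y x = 1; rwa [hammingDist_comm]⟩
  loopless := ⟨fun x (h : hammingDist x x = 1) => by simp [hammingDist_self] at h⟩

/-- Distance from a vertex to a set of vertices. -/
noncomputable def distTo {V : Type*} (Γ : SimpleGraph V) (C : Set V) (v : V) : ℕ :=
  sInf (Γ.dist v '' C)

/-- `C` is a completely regular code of covering radius `ρ` with intersection array
`{β 0, …, β (ρ-1); γ 1, …, γ ρ}`: the distance partition of `C` is equitable with the
corresponding tridiagonal quotient matrix. -/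
def IsCompletelyRegular {V : Type*} (Γ : SimpleGraph V) (C : Set V) (ρ : ℕ)
    (β γ : ℕ → ℕ) : Prop :=
  C.Nonempty ∧
  (∀ v, distTo Γ C v ≤ ρ) ∧
  (∃ v, distTo Γ C v = ρ) ∧
  (∀ v t, distTo Γ C v = t → t < ρ →
    {u | Γ.Adj v u ∧ distTo Γ C u = t + 1}.ncard = β t) ∧
  (∀ v t, distTo Γ C v = t → 0 < t →
    {u | Γ.Adj v u ∧ distTo Γ C u = t - 1}.ncard = γ t)

/-- `Γ` is a distance-regular graph of diameter `D` with intersection numbers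
`b 0, …, b (D-1)` and `c 1, …, c D`. -/
def IsDistanceRegular {V : Type*} (Γ : SimpleGraph V) (D : ℕ) (b c : ℕ → ℕ) : Prop :=
  Γ.Connected ∧
  (∀ u v, Γ.dist u v ≤ D) ∧
  (∃ u v, Γ.dist u v = D) ∧
  (∀ u v i, Γ.dist u v = i → i < D →
    {w | Γ.Adj v w ∧ Γ.dist u w = i + 1}.ncard = b i) ∧
  (∀ u v i, Γ.dist u v = i → 0 < i →
    {w | Γ.Adj v w ∧ Γ.dist u w = i - 1}.ncard = c i)


section Helpers

variable {V : Type*} {Γ : SimpleGraph V} {C : Set V}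

lemma distTo_exists_mem (hC : C.Nonempty) (x : V) :
    ∃ c₀ ∈ C, Γ.dist x c₀ = distTo Γ C x := by
  have h : (Γ.dist x '' C).Nonempty := hC.image _
  obtain ⟨c₀, hc₀, hd⟩ := Nat.sInf_mem h
  exact ⟨c₀, hc₀, hd⟩

lemma distTo_le_of_mem {c₀ : V} (hc : c₀ ∈ C) (x : V) :
    distTo Γ C x ≤ Γ.dist x c₀ :=
  Nat.sInf_le ⟨c₀, hc, rfl⟩

lemma distTo_lipschitz (hconn : Γ.Connected) (hC : C.Nonempty) (x y : V) :
    distTo Γ C x ≤ Γ.dist x y + distTo Γ C y := by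
  obtain ⟨c₀, hc₀, hd⟩ := distTo_exists_mem (Γ := Γ) hC y
  calc distTo Γ C x ≤ Γ.dist x c₀ := distTo_le_of_mem hc₀ x
    _ ≤ Γ.dist x y + Γ.dist y c₀ := hconn.dist_triangle
    _ = Γ.dist x y + distTo Γ C y := by rw [hd]

lemma exists_adj_dist_pred (hconn : Γ.Connected) {v u : V} {i : ℕ}
    (hd : Γ.dist v u = i) (hi : 0 < i) :
    ∃ w, Γ.Adj u w ∧ Γ.dist v w = i - 1 := by
  obtain ⟨p, hp⟩ := hconn.exists_walk_length_eq_dist u v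
  cases p with
  | nil =>
    simp only [SimpleGraph.Walk.length_nil] at hp
    rw [SimpleGraph.dist_comm] at hd
    omega
  | @cons _ w _ h q =>
    refine ⟨w, h, ?_⟩
    have h1 : Γ.dist w v ≤ q.length := Γ.dist_le q
    have h2 : Γ.dist u v = Γ.dist v u := SimpleGraph.dist_comm
    have h3 : Γ.dist v w = Γ.dist w v := SimpleGraph.dist_comm
    have h4 : Γ.dist v u ≤ Γ.dist v w + Γ.dist w u := hconn.dist_triangle
    have h5 : Γ.dist w u = 1 := SimpleGraph.dist_eq_one_iff_adj.mpr h.symm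
    simp only [SimpleGraph.Walk.length_cons] at hp
    omega

end Helpers

/-- Double-counting identity: in a distance-regular graph `Γ` with intersection numbers
`c 1, …, c D`, for a completely regular code `C` with intersection array
`{β 0,…,β (ρ-1); γ 1,…,γ ρ}`, a vertex `v ∈ C^(j)` and `1 ≤ i ≤ ρ - j`,
`c i · |W_i ∩ C^(j+i)| = β (j+i-1) · |W_{i-1} ∩ C^(j+i-1)|`, where `W_l` is the set of
vertices at distance `l` from `v`. -/

theorem crc_double_counting {V : Type*} (Γ : SimpleGraph V) (D : ℕ) (b c : ℕ → ℕ)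
    (hΓ : IsDistanceRegular Γ D b c)
    (C : Set V) (ρ : ℕ) (β γ : ℕ → ℕ)
    (hC : IsCompletelyRegular Γ C ρ β γ)
    (j : ℕ) (hj : j ≤ ρ) (v : V) (hv : distTo Γ C v = j)
    (i : ℕ) (hi1 : 1 ≤ i) (hi : i ≤ ρ - j) :
    c i * {u | Γ.dist v u = i ∧ distTo Γ C u = j + i}.ncard =
      β (j + i - 1) * {u | Γ.dist v u = i - 1 ∧ distTo Γ C u = j + i - 1}.ncard := by
  classical
  obtain ⟨hconn, hDle, -, hb, hc⟩ := hΓ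
  obtain ⟨hCne, hρle, -, hβ, hγ⟩ := hC
  have hadj_dist : ∀ {x y : V}, Γ.Adj x y → Γ.dist x y = 1 :=
    fun h => SimpleGraph.dist_eq_one_iff_adj.mpr h
  set B := {u | Γ.dist v u = i ∧ distTo Γ C u = j + i} with hBdef
  set A := {u | Γ.dist v u = i - 1 ∧ distTo Γ C u = j + i - 1} with hAdef
  set a := β (j + i - 1) with ha
  set G : V → Set V := fun w => {u | Γ.Adj w u ∧ distTo Γ C u = j + i} with hGdef
  set F : V → Set V := fun u => {w | Γ.Adj u w ∧ Γ.dist v w = i - 1} with hFdef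
  have hGcard : ∀ w ∈ A, (G w).ncard = a := by
    intro w hw
    have h1 := hβ w (j + i - 1) hw.2 (by omega)
    have h2 : j + i - 1 + 1 = j + i := by omega
    rw [h2] at h1
    exact h1
  have hGsub : ∀ w ∈ A, G w ⊆ B := by
    intro w hw u hu
    have hle : Γ.dist v u ≤ i := by
      have h1 : Γ.dist v u ≤ Γ.dist v w + Γ.dist w u := hconn.dist_triangle
      have h2 : Γ.dist w u = 1 := hadj_dist hu.1
      have h3 := hw.1
      omega
    have hge : i ≤ Γ.dist v u := by
      have h1 := distTo_lipschitz hconn hCne u v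
      have h2 : Γ.dist u v = Γ.dist v u := SimpleGraph.dist_comm
      have h3 := hu.2
      rw [h3, h2, hv] at h1
      omega
    exact ⟨le_antisymm hle hge, hu.2⟩
  have hFcard : ∀ u ∈ B, (F u).ncard = c i := by
    intro u hu
    exact hc v u i hu.1 (by omega)
  have hFsub : ∀ u ∈ B, F u ⊆ A := by
    intro u hu w hw
    refine ⟨hw.2, ?_⟩
    have hle : distTo Γ C w ≤ j + i - 1 := by
      have h1 := distTo_lipschitz hconn hCne w v
      have h2 : Γ.dist w v = Γ.dist v w := SimpleGraph.dist_comm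
      rw [h2, hw.2, hv] at h1
      omega
    have hge : j + i - 1 ≤ distTo Γ C w := by
      have h1 := distTo_lipschitz hconn hCne u w
      have h2 : Γ.dist u w = 1 := hadj_dist hw.1
      have h3 := hu.2
      omega
    omega
  have hBcov : ∀ u ∈ B, ∃ w ∈ A, Γ.Adj w u := by
    intro u hu
    obtain ⟨w, hadj, hdw⟩ := exists_adj_dist_pred hconn hu.1 (by omega)
    exact ⟨w, hFsub u hu ⟨hadj, hdw⟩, hadj.symm⟩
  by_cases hAfin : A.Finite
  · by_cases hBfin : B.Finite
    · -- double counting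
      set Af := hAfin.toFinset with hAf
      set Bf := hBfin.toFinset with hBf
      set E : Finset (V × V) := (Af ×ˢ Bf).filter (fun p => Γ.Adj p.1 p.2) with hE
      have hEfst : E.card = a * Af.card := by
        have hmap : ∀ p ∈ E, p.1 ∈ Af := by
          intro p hp
          exact (Finset.mem_product.mp (Finset.mem_filter.mp hp).1).1
        rw [Finset.card_eq_sum_card_fiberwise hmap]
        rw [Finset.sum_congr rfl (g := fun _ => a) ?_, Finset.sum_const, smul_eq_mul, mul_comm]
        intro w hw
        have hwA : w ∈ A := hAfin.mem_toFinset.mp hw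
        have hfib : Finset.filter (fun p => p.1 = w) E
            = {w} ×ˢ (Bf.filter (fun u => Γ.Adj w u)) := by
          ext ⟨x, y⟩
          simp only [hE, Finset.mem_filter, Finset.mem_product, Finset.mem_singleton]
          constructor
          · rintro ⟨⟨⟨hxa, hyb⟩, hadj⟩, rfl⟩
            exact ⟨rfl, hyb, hadj⟩
          · rintro ⟨rfl, hyb, hadj⟩
            exact ⟨⟨⟨hw, hyb⟩, hadj⟩, rfl⟩
        rw [hfib, Finset.card_product, Finset.card_singleton, one_mul]
        have hset : ((Bf.filter (fun u => Γ.Adj w u)) : Set V) = G w := by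
          ext u
          simp only [Finset.coe_filter, Set.mem_setOf_eq, hBf, Set.Finite.mem_toFinset]
          constructor
          · rintro ⟨huB, hadj⟩
            exact ⟨hadj, huB.2⟩
          · intro hu
            exact ⟨hGsub w hwA hu, hu.1⟩
        have := Set.ncard_coe_finset (Bf.filter (fun u => Γ.Adj w u))
        rw [hset, hGcard w hwA] at this
        exact this.symm
      have hEsnd : E.card = c i * Bf.card := by
        have hmap : ∀ p ∈ E, p.2 ∈ Bf := by
          intro p hp
          exact (Finset.mem_product.mp (Finset.mem_filter.mp hp).1).2
        rw [Finset.card_eq_sum_card_fiberwise hmap]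
        rw [Finset.sum_congr rfl (g := fun _ => c i) ?_, Finset.sum_const, smul_eq_mul, mul_comm]
        intro u hu
        have huB : u ∈ B := hBfin.mem_toFinset.mp hu
        have hfib : Finset.filter (fun p => p.2 = u) E
            = (Af.filter (fun w => Γ.Adj w u)) ×ˢ {u} := by
          ext ⟨x, y⟩
          simp only [hE, Finset.mem_filter, Finset.mem_product, Finset.mem_singleton]
          constructor
          · rintro ⟨⟨⟨hxa, hyb⟩, hadj⟩, rfl⟩
            exact ⟨⟨hxa, hadj⟩, rfl⟩
          · rintro ⟨⟨hxa, hadj⟩, rfl⟩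
            exact ⟨⟨⟨hxa, hu⟩, hadj⟩, rfl⟩
        rw [hfib, Finset.card_product, Finset.card_singleton, mul_one]
        have hset : ((Af.filter (fun w => Γ.Adj w u)) : Set V) = F u := by
          ext w
          simp only [Finset.coe_filter, Set.mem_setOf_eq, hAf, Set.Finite.mem_toFinset]
          constructor
          · rintro ⟨hwA, hadj⟩
            exact ⟨hadj.symm, hwA.1⟩
          · intro hw
            exact ⟨hFsub u huB hw, hw.1.symm⟩
        have := Set.ncard_coe_finset (Af.filter (fun w => Γ.Adj w u))
        rw [hset, hFcard u huB] at this
        exact this.symm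
      have hAcard : A.ncard = Af.card := by
        rw [← Set.ncard_coe_finset Af, hAfin.coe_toFinset]
      have hBcard : B.ncard = Bf.card := by
        rw [← Set.ncard_coe_finset Bf, hBfin.coe_toFinset]
      rw [hAcard, hBcard, ← hEsnd, hEfst]
    · -- B infinite
      have hBn : B.ncard = 0 := Set.Infinite.ncard hBfin
      have hex : ∃ w ∈ A, ¬ (G w).Finite := by
        by_contra hfin
        push_neg at hfin
        apply hBfin
        apply (Set.Finite.biUnion hAfin hfin).subset
        intro u hu
        obtain ⟨w, hwA, hadj⟩ := hBcov u hu
        exact Set.mem_biUnion hwA ⟨hadj, hu.2⟩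
      obtain ⟨w, hwA, hinf⟩ := hex
      have ha0 : a = 0 := by
        rw [← hGcard w hwA]
        exact Set.Infinite.ncard hinf
      rw [hBn, ha0, mul_zero, zero_mul]
  · -- A infinite
    have hAn : A.ncard = 0 := Set.Infinite.ncard hAfin
    rw [hAn, mul_zero]
    rcases Nat.eq_zero_or_pos (c i) with h0 | hcpos
    · rw [h0, zero_mul]
    rcases Set.eq_empty_or_nonempty B with hBe | ⟨u₀, hu₀⟩
    · rw [hBe, Set.ncard_empty, mul_zero]
    by_cases hBfin : B.Finite
    · exfalso
      have hF0 : (F u₀).ncard = c i := hFcard u₀ hu₀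
      obtain ⟨w₀, hw₀⟩ := Set.nonempty_of_ncard_ne_zero (by omega : (F u₀).ncard ≠ 0)
      have hw₀A : w₀ ∈ A := hFsub u₀ hu₀ hw₀
      have hane : a ≠ 0 := by
        have hGfin : (G w₀).Finite := hBfin.subset (hGsub w₀ hw₀A)
        have hu₀G : u₀ ∈ G w₀ := ⟨hw₀.1.symm, hu₀.2⟩
        have := (Set.ncard_pos hGfin).mpr ⟨u₀, hu₀G⟩
        rw [hGcard w₀ hw₀A] at this
        omega
      have hAcov : ∀ w ∈ A, ∃ u ∈ B, Γ.Adj u w := by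
        intro w hwA
        obtain ⟨u, hu⟩ := Set.nonempty_of_ncard_ne_zero
          (by rw [hGcard w hwA]; exact hane)
        exact ⟨u, hGsub w hwA hu, hu.1.symm⟩
      have hex : ∃ u ∈ B, ¬ (F u).Finite := by
        by_contra hfin
        push_neg at hfin
        apply hAfin
        apply (Set.Finite.biUnion hBfin hfin).subset
        intro w hw
        obtain ⟨u, huB, hadj⟩ := hAcov w hw
        exact Set.mem_biUnion huB ⟨hadj, hw.1⟩
      obtain ⟨u, huB, hinf⟩ := hex
      have h1 := hFcard u huB
      rw [Set.Infinite.ncard hinf] at h1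
      omega
    · rw [Set.Infinite.ncard hBfin, mul_zero]
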